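/- Let n = 6 and r₀ > 0. Then there exists a constant C > 0 such that for all δ ∈ (0, 1/2], the following estimate holds: |∫_{B(0,r₀)} |x|²·U_{δ,0}(x)² dx − 576·π³·δ⁴·log(1/δ)| ≤ C·δ⁴, where B(0,r₀) is the Euclidean ball of radius r₀ centered at the origin in ℝ⁶. (Here 576·π³ = 24²·ω₅, with ω₅ = π³ the surface measure of the unit sphere S⁵ ⊂ ℝ⁶, and in dimension 6 one has U_{δ,0}(x)² = 576·δ⁴/(δ²+|x|²)⁴.) -/

import Mathlib

/-!
In polar coordinates the integral is `576 δ⁴ |S⁵| ∫₀^{r₀} r⁷ / (δ² + r²)⁴ dr` with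
`|S⁵| = 6 |B₁| = π³`. Substituting `t = δ² + r²` and `s = δ² / t` gives the primitive
`(log t + 3 s - 3 s²/2 + s³/3) / 2`, which equals `log δ + 11/12` at `r = 0`. At `r = r₀` the
logarithm stays bounded for `δ ≤ 1` and `s ∈ [0, 1]`, so only `-log δ` survives, up to `O(1)`.
-/

open MeasureTheory Real Set Metric Module

section RadialIntegral

variable {E F : Type*} [NormedAddCommGroup E] [NormedSpace ℝ E] [FiniteDimensional ℝ E]
  [Nontrivial E] [MeasurableSpace E] [BorelSpace E] [NormedAddCommGroup F] [NormedSpace ℝ F]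

theorem setIntegral_ball_fun_norm_addHaar (μ : Measure E) [μ.IsAddHaarMeasure] (f : ℝ → F)
    (r : ℝ) :
    ∫ x in ball (0 : E) r, f ‖x‖ ∂μ =
      finrank ℝ E • μ.real (ball 0 1) • ∫ y in Ioo 0 r, y ^ (finrank ℝ E - 1) • f y := by
  have hball : (ball (0 : E) r).indicator (fun x ↦ f ‖x‖) =
      fun x ↦ (Iio r).indicator f ‖x‖ := by
    ext x
    simp [indicator]
  rw [← integral_indicator measurableSet_ball, hball, integral_fun_norm_addHaar,
    ← Ioi_inter_Iio, ← setIntegral_indicator measurableSet_Iio]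
  simp_rw [indicator_smul_apply]

end RadialIntegral

theorem EuclideanSpace.measureReal_unitBall_fin_six :
    volume.real (ball (0 : EuclideanSpace ℝ (Fin 6)) 1) = π ^ 3 / 6 := by
  rw [measureReal_def, InnerProductSpace.volume_ball_of_dim_even (k := 3) (by simp)]
  simp only [finrank_euclideanSpace_fin, ENNReal.ofReal_one, one_pow, one_mul]
  rw [ENNReal.toReal_ofReal (by positivity)]
  norm_num [Nat.factorial]

noncomputable def bubbleCorrection (s : ℝ) : ℝ := 3 * s - 3 / 2 * s ^ 2 + 1 / 3 * s ^ 3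

noncomputable def bubblePrimitive (δ r : ℝ) : ℝ :=
  (log (δ ^ 2 + r ^ 2) + bubbleCorrection (δ ^ 2 / (δ ^ 2 + r ^ 2))) / 2

theorem hasDerivAt_bubbleCorrection (s : ℝ) :
    HasDerivAt bubbleCorrection (3 - 3 * s + s ^ 2) s := by
  refine ((((hasDerivAt_id' s).const_mul 3).sub ((hasDerivAt_pow 2 s).const_mul (3 / 2))).add
    ((hasDerivAt_pow 3 s).const_mul (1 / 3))).congr_deriv ?_
  norm_num
  ring

theorem hasDerivAt_bubblePrimitive {δ : ℝ} (hδ : δ ≠ 0) (r : ℝ) :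
    HasDerivAt (bubblePrimitive δ) (r ^ 7 / (δ ^ 2 + r ^ 2) ^ 4) r := by
  have ht : δ ^ 2 + r ^ 2 ≠ 0 := by positivity
  have hsum : HasDerivAt (fun r : ℝ ↦ δ ^ 2 + r ^ 2) (2 * r) r := by
    simpa using (hasDerivAt_pow 2 r).const_add (δ ^ 2)
  have hs : HasDerivAt (fun r : ℝ ↦ δ ^ 2 / (δ ^ 2 + r ^ 2))
      ((0 * (δ ^ 2 + r ^ 2) - δ ^ 2 * (2 * r)) / (δ ^ 2 + r ^ 2) ^ 2) r :=
    (hasDerivAt_const r (δ ^ 2)).div hsum ht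
  refine (((hsum.log ht).add ((hasDerivAt_bubbleCorrection _).comp r hs)).div_const 2)
    |>.congr_deriv ?_
  field_simp
  ring

theorem integral_pow_seven_div_sq_add_sq_pow_four {δ : ℝ} (hδ : δ ≠ 0) (r : ℝ) :
    ∫ y in (0 : ℝ)..r, y ^ 7 / (δ ^ 2 + y ^ 2) ^ 4 =
      bubblePrimitive δ r - bubblePrimitive δ 0 := by
  refine intervalIntegral.integral_eq_sub_of_hasDerivAt
    (fun y _ ↦ hasDerivAt_bubblePrimitive hδ y) (Continuous.intervalIntegrable ?_ 0 r)
  exact continuous_id.pow 7 |>.div (by fun_prop) fun y ↦ by positivity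

theorem bubblePrimitive_zero {δ : ℝ} (hδ : 0 < δ) : bubblePrimitive δ 0 = log δ + 11 / 12 := by
  have : δ ^ 2 ≠ 0 := by positivity
  simp only [bubblePrimitive, bubbleCorrection, ne_eq, OfNat.ofNat_ne_zero, not_false_eq_true,
    zero_pow, add_zero, div_self this, log_pow]
  push_cast
  ring

theorem bubbleCorrection_mem_Icc {s : ℝ} (hs : s ∈ Icc 0 1) :
    bubbleCorrection s ∈ Icc 0 (11 / 6) := by
  obtain ⟨hs0, hs1⟩ := hs
  -- `11/6 - bubbleCorrection s = (1 - s)³/3 + (1 - s)(3 - s)/2`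
  constructor <;> unfold bubbleCorrection <;>
    nlinarith [mul_nonneg hs0 (sq_nonneg s), mul_nonneg (sub_nonneg.2 hs1) (sq_nonneg (1 - s)),
      mul_nonneg (sub_nonneg.2 hs1) (by linarith : (0 : ℝ) ≤ 3 - s)]

theorem exists_abs_bubblePrimitive_sub_le {r : ℝ} (hr : r ≠ 0) :
    ∃ M > 0, ∀ δ : ℝ, δ ^ 2 ≤ 1 → |bubblePrimitive δ r - 11 / 12| ≤ M := by
  refine ⟨(|log (r ^ 2)| + |log (r ^ 2 + 1)|) / 2 + 1, by positivity, fun δ hδ ↦ ?_⟩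
  have ht : 0 < δ ^ 2 + r ^ 2 := by positivity
  have hlog_ge : log (r ^ 2) ≤ log (δ ^ 2 + r ^ 2) :=
    log_le_log (by positivity) (by linarith [sq_nonneg δ])
  have hlog_le : log (δ ^ 2 + r ^ 2) ≤ log (r ^ 2 + 1) := log_le_log ht (by linarith)
  have hs : δ ^ 2 / (δ ^ 2 + r ^ 2) ∈ Icc 0 1 :=
    ⟨by positivity, div_le_one_of_le₀ (by nlinarith [sq_nonneg r]) ht.le⟩
  obtain ⟨hΦ0, hΦ1⟩ := bubbleCorrection_mem_Icc hs
  rw [bubblePrimitive, abs_le]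
  constructor <;> linarith [neg_abs_le (log (r ^ 2)), le_abs_self (log (r ^ 2 + 1)),
    abs_nonneg (log (r ^ 2)), abs_nonneg (log (r ^ 2 + 1))]

/-- In dimension `n = 6`, for `r₀ > 0` there is `C > 0` such
that for all `0 < δ ≤ 1/2`:
`|∫_{B(0,r₀)} |x|²·U_{δ,0}(x)² dx − 576·π³·δ⁴·log(1/δ)| ≤ C·δ⁴`,
where `U_{δ,0}(x) = (√24·δ/(δ²+|x|²))²` so that
`U_{δ,0}(x)² = 576·δ⁴/(δ²+|x|²)⁴`. -/
theorem bubble_weighted_L2_ball_estimate_dim6 (r₀ : ℝ) (hr₀ : 0 < r₀)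
    (Ub : ℝ → EuclideanSpace ℝ (Fin 6) → ℝ)
    (hUb : ∀ δ x, Ub δ x = (Real.sqrt 24 * δ / (δ ^ 2 + ‖x‖ ^ 2)) ^ 2) :
    ∃ C > (0 : ℝ), ∀ δ : ℝ, 0 < δ → δ ≤ 1 / 2 →
      |(∫ x in Metric.ball (0 : EuclideanSpace ℝ (Fin 6)) r₀, ‖x‖ ^ 2 * Ub δ x ^ 2)
        - 576 * Real.pi ^ 3 * δ ^ 4 * Real.log (1 / δ)| ≤ C * δ ^ 4 := by
  obtain ⟨M, hM, hG⟩ := exists_abs_bubblePrimitive_sub_le hr₀.ne'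
  refine ⟨576 * π ^ 3 * M, by positivity, fun δ hδ hδ_le ↦ ?_⟩
  have hU : ∀ x : EuclideanSpace ℝ (Fin 6),
      ‖x‖ ^ 2 * Ub δ x ^ 2 = 576 * δ ^ 4 * (‖x‖ ^ 2 / (δ ^ 2 + ‖x‖ ^ 2) ^ 4) := fun x ↦ by
    rw [hUb, ← pow_mul, div_pow, mul_pow, pow_mul, sq_sqrt (by norm_num)]
    ring
  have hpolar : ∫ x in ball (0 : EuclideanSpace ℝ (Fin 6)) r₀, ‖x‖ ^ 2 * Ub δ x ^ 2 =
      576 * π ^ 3 * δ ^ 4 * (bubblePrimitive δ r₀ - bubblePrimitive δ 0) := by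
    have hpow : ∀ y : ℝ,
        y ^ (6 - 1) • (y ^ 2 / (δ ^ 2 + y ^ 2) ^ 4) = y ^ 7 / (δ ^ 2 + y ^ 2) ^ 4 :=
      fun y ↦ by rw [smul_eq_mul]; ring
    simp_rw [hU]
    rw [integral_const_mul,
      setIntegral_ball_fun_norm_addHaar volume (fun r ↦ r ^ 2 / (δ ^ 2 + r ^ 2) ^ 4),
      finrank_euclideanSpace_fin, EuclideanSpace.measureReal_unitBall_fin_six,
      ← integral_pow_seven_div_sq_add_sq_pow_four hδ.ne', intervalIntegral.integral_of_le hr₀.le,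
      integral_Ioc_eq_integral_Ioo]
    simp_rw [hpow, nsmul_eq_mul, smul_eq_mul]
    ring
  rw [hpolar, bubblePrimitive_zero hδ, one_div, log_inv]
  calc _ = |576 * π ^ 3 * δ ^ 4 * (bubblePrimitive δ r₀ - 11 / 12)| := by ring_nf
    _ = 576 * π ^ 3 * δ ^ 4 * |bubblePrimitive δ r₀ - 11 / 12| := by
        rw [abs_mul, abs_of_pos (by positivity)]
    _ ≤ 576 * π ^ 3 * δ ^ 4 * M := by
        gcongr
        exact hG δ (by nlinarith)
    _ = 576 * π ^ 3 * M * δ ^ 4 := by ring
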